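/- arXiv:1002.3357 — 2 statements merged into one kernel-verified Lean document; each statement's English description precedes it below -/
import Mathlib

section
/- Let X be a set, f₁, f₂ : X → X, h : X → ℝ nonnegative, d₁, d₂ ≥ 2, r ≥ 1, C ≥ 0, and suppose (1/d₁)h(f₁(Q)) + (1/d₂)h(f₂(Q)) + C ≥ (1 + 1/r)·h(Q) for all Q ∈ X. Let Φ be the monoid of maps generated by f₁ and f₂ under composition, and set δ = (1/(1+1/r))(1/d₁ + 1/d₂). If δ < 1 and P ∈ X has finite Φ-orbit Φ(P) = {φ(P) : φ ∈ Φ}, then h(P) ≤ (1 + 1/r)·δ^{M+1}·sup_{R ∈ Φ(P)} h(R) + C/(1−δ) for every M ≥ 0; hence h(P) ≤ C/(1−δ). -/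
/-!
Let `ρ = 1 + 1/r`, `c = C/ρ` and `S` the orbit of `P`. The hypothesis says that whenever `B`
bounds `h` on the forward-invariant set `S`, so does `δ B + c`. Iterating this affine map from
`sup_S h` gives the bounds `c/(1-δ) + δⁿ (sup_S h - c/(1-δ))`, which converge to the fixed point
`c/(1-δ) ≤ C/(1-δ)` because `0 ≤ δ < 1`.
-/

/-- Composition of the maps indexed by a word `I`: `f_I = f_{i₁} ∘ ⋯ ∘ f_{i_m}`. -/
def wordComp {X : Type*} (f : Fin 2 → X → X) : List (Fin 2) → X → X
  | [], P => P
  | i :: I, P => f i (wordComp f I P)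

open Set Filter Topology

theorem iterate_affine_eq {δ : ℝ} (hδ : δ ≠ 1) (c T : ℝ) (n : ℕ) :
    (fun B => δ * B + c)^[n] T = c / (1 - δ) + δ ^ n * (T - c / (1 - δ)) := by
  have h1δ : 1 - δ ≠ 0 := sub_ne_zero.mpr hδ.symm
  induction n with
  | zero => simp
  | succ n ih =>
    rw [Function.iterate_succ_apply', ih]
    field_simp
    ring

theorem le_of_forall_le_add_pow_mul {x b y δ : ℝ} (hδ0 : 0 ≤ δ) (hδ1 : δ < 1)
    (hx : ∀ n : ℕ, x ≤ b + δ ^ n * y) : x ≤ b := by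
  have hlim : Tendsto (fun n => b + δ ^ n * y) atTop (𝓝 (b + 0 * y)) :=
    ((tendsto_pow_atTop_nhds_zero_of_lt_one hδ0 hδ1).mul_const y).const_add b
  rw [zero_mul, add_zero] at hlim
  exact ge_of_tendsto' hlim hx

theorem mapsTo_range_wordComp {X : Type*} (f : Fin 2 → X → X) (P : X) (i : Fin 2) :
    MapsTo (f i) (range fun I => wordComp f I P) (range fun I => wordComp f I P) := by
  rintro _ ⟨I, rfl⟩
  exact ⟨i :: I, rfl⟩

theorem mapsTo_affine_upperBounds_image {X ι : Type*} [Fintype ι] {S : Set X}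
    {f : ι → X → X} {h : X → ℝ} {a : ι → ℝ} {ρ C : ℝ}
    (hS : ∀ i, MapsTo (f i) S S) (ha : ∀ i, 0 ≤ a i) (hρ : 0 < ρ)
    (hyp : ∀ Q ∈ S, ρ * h Q ≤ ∑ i, a i * h (f i Q) + C) :
    MapsTo (fun B => 1 / ρ * (∑ i, a i) * B + 1 / ρ * C)
      (upperBounds (h '' S)) (upperBounds (h '' S)) := by
  rintro B hB _ ⟨Q, hQ, rfl⟩
  have hsum : ∑ i, a i * h (f i Q) ≤ (∑ i, a i) * B := by
    rw [Finset.sum_mul]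
    exact Finset.sum_le_sum fun i _ =>
      mul_le_mul_of_nonneg_left (hB (mem_image_of_mem h (hS i hQ))) (ha i)
  calc h Q = 1 / ρ * (ρ * h Q) := by field_simp
    _ ≤ 1 / ρ * ((∑ i, a i) * B + C) := by gcongr; linarith [hyp Q hQ]
    _ = 1 / ρ * (∑ i, a i) * B + 1 / ρ * C := by ring

theorem stmt_6 {X : Type*} (f : Fin 2 → X → X) (h : X → ℝ)
    (h0 : ∀ P, 0 ≤ h P) (d : Fin 2 → ℝ) (hd : ∀ i, 2 ≤ d i)
    (r : ℝ) (hr : 1 ≤ r) (C : ℝ) (hC : 0 ≤ C)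
    (hyp : ∀ Q : X,
      (1 + 1 / r) * h Q ≤ (1 / d 0) * h (f 0 Q) + (1 / d 1) * h (f 1 Q) + C)
    (hδ : (1 / (1 + 1 / r)) * (1 / d 0 + 1 / d 1) < 1)
    (P : X) (hfin : (Set.range fun I : List (Fin 2) => wordComp f I P).Finite) :
    (∀ M : ℕ,
      h P ≤ (1 + 1 / r) * ((1 / (1 + 1 / r)) * (1 / d 0 + 1 / d 1)) ^ (M + 1) *
          sSup (h '' (Set.range fun I : List (Fin 2) => wordComp f I P)) +
        C / (1 - (1 / (1 + 1 / r)) * (1 / d 0 + 1 / d 1))) ∧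
    h P ≤ C / (1 - (1 / (1 + 1 / r)) * (1 / d 0 + 1 / d 1)) := by
  set S := range fun I : List (Fin 2) => wordComp f I P
  set ρ := 1 + 1 / r
  set δ := 1 / ρ * (1 / d 0 + 1 / d 1)
  set T := sSup (h '' S)
  have hρ : 1 ≤ ρ := le_add_of_nonneg_right (by positivity)
  have hd_inv (i : Fin 2) : 0 ≤ 1 / d i := one_div_nonneg.mpr (zero_le_two.trans (hd i))
  have hδ0 : 0 ≤ δ := mul_nonneg (by positivity) (add_nonneg (hd_inv 0) (hd_inv 1))
  have hPS : h P ∈ h '' S := mem_image_of_mem h ⟨[], rfl⟩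
  have hT : T ∈ upperBounds (h '' S) := (isLUB_csSup ⟨_, hPS⟩ (hfin.image h).bddAbove).1
  have hstep := mapsTo_affine_upperBounds_image (h := h) (a := fun i => 1 / d i) (ρ := ρ)
    (C := C) (mapsTo_range_wordComp f P) hd_inv (by positivity)
    (fun Q _ => by simpa [Fin.sum_univ_two] using hyp Q)
  simp only [Fin.sum_univ_two] at hstep
  set B₀ := C / ρ / (1 - δ)
  have hB₀ : 0 ≤ B₀ := div_nonneg (by positivity) (sub_pos.mpr hδ).le
  have hbound (n : ℕ) : h P ≤ B₀ + δ ^ n * (T - B₀) := by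
    have := (hstep.iterate n) hT hPS
    rwa [iterate_affine_eq hδ.ne, one_div_mul_eq_div (a := ρ)] at this
  have hB₀C : B₀ ≤ C / (1 - δ) :=
    div_le_div_of_nonneg_right (div_le_self hC hρ) (sub_pos.mpr hδ).le
  refine ⟨fun M => ?_, (le_of_forall_le_add_pow_mul hδ0 hδ hbound).trans hB₀C⟩
  have hT0 : 0 ≤ T := (h0 P).trans (hT hPS)
  have hpow : 0 ≤ δ ^ (M + 1) := pow_nonneg hδ0 _
  nlinarith [hbound (M + 1), mul_le_mul_of_nonneg_right hρ (mul_nonneg hpow hT0)]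
end

section
/- Let X be a set, f : X → X a bijection with inverse g, h : X → ℝ nonnegative, and d, d' ≥ 2, C ≥ 0 constants with (1/d)h(f(P)) + (1/d')h(g(P)) + C ≥ (1 + 1/(d·d'))·h(P) for all P ∈ X. Then the set of points P with finite f-orbit {f^k(P) : k ∈ ℤ} has h bounded by a constant depending only on d, d', C. -/
/-!
Let `Q` be a point of the finite orbit at which `h` is maximal. Bounding `h (e Q)` and
`h (e⁻¹ Q)` by `h Q` in the hypothesis at `Q` gives `(1 - 1/d) (1 - 1/d') h Q ≤ C`, and every
point of the orbit has height at most `h Q`.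
-/

namespace Equiv.Perm

variable {X : Type*}

theorem apply_mem_range_zpow_apply {e : Perm X} {P Q : X}
    (hQ : Q ∈ Set.range fun k : ℤ => (e ^ k) P) : e Q ∈ Set.range fun k : ℤ => (e ^ k) P := by
  obtain ⟨k, rfl⟩ := hQ
  exact ⟨1 + k, by simp only [zpow_add, zpow_one, mul_apply]⟩

theorem symm_apply_mem_range_zpow_apply {e : Perm X} {P Q : X}
    (hQ : Q ∈ Set.range fun k : ℤ => (e ^ k) P) :
    e.symm Q ∈ Set.range fun k : ℤ => (e ^ k) P := by
  obtain ⟨k, rfl⟩ := hQ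
  exact ⟨-1 + k, by simp only [zpow_add, zpow_neg_one, mul_apply, inv_def]⟩

end Equiv.Perm

theorem le_div_of_one_add_mul_mul_le {a b x C : ℝ} (ha : a < 1) (hb : b < 1)
    (hx : (1 + a * b) * x ≤ a * x + b * x + C) : x ≤ C / ((1 - a) * (1 - b)) := by
  rw [le_div_iff₀ (mul_pos (sub_pos.2 ha) (sub_pos.2 hb))]
  linear_combination hx

theorem le_of_finite_range_zpow_apply {X : Type*} {e : Equiv.Perm X} {h : X → ℝ} {a b C : ℝ}
    (ha₀ : 0 ≤ a) (hb₀ : 0 ≤ b) (ha : a < 1) (hb : b < 1)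
    (hyp : ∀ P, (1 + a * b) * h P ≤ a * h (e P) + b * h (e.symm P) + C) {P : X}
    (hfin : (Set.range fun k : ℤ => (e ^ k) P).Finite) :
    h P ≤ C / ((1 - a) * (1 - b)) := by
  set S := Set.range fun k : ℤ => (e ^ k) P
  have hPS : P ∈ S := ⟨0, rfl⟩
  obtain ⟨Q, hQS, hQmax⟩ := Set.exists_max_image S h hfin ⟨P, hPS⟩
  have hQ : (1 + a * b) * h Q ≤ a * h Q + b * h Q + C :=
    calc (1 + a * b) * h Q ≤ a * h (e Q) + b * h (e.symm Q) + C := hyp Q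
      _ ≤ a * h Q + b * h Q + C := by
        gcongr
        · exact hQmax _ (Equiv.Perm.apply_mem_range_zpow_apply hQS)
        · exact hQmax _ (Equiv.Perm.symm_apply_mem_range_zpow_apply hQS)
  exact (hQmax P hPS).trans (le_div_of_one_add_mul_mul_le ha hb hQ)

theorem stmt_8_general {X : Type*} (e : Equiv.Perm X) (h : X → ℝ)
    (d d' C : ℝ) (hd : 2 ≤ d) (hd' : 2 ≤ d')
    (hyp : ∀ P : X,
      (1 + 1 / (d * d')) * h P ≤
        (1 / d) * h (e P) + (1 / d') * h (e.symm P) + C) :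
    ∃ B : ℝ, ∀ P : X,
      (Set.range fun k : ℤ => (e ^ k) P).Finite → h P ≤ B := by
  have hd₁ : 1 / d < 1 := (div_lt_one (by linarith)).2 (by linarith)
  have hd'₁ : 1 / d' < 1 := (div_lt_one (by linarith)).2 (by linarith)
  refine ⟨C / ((1 - 1 / d) * (1 - 1 / d')), fun P hfin => ?_⟩
  refine le_of_finite_range_zpow_apply (by positivity) (by positivity) hd₁ hd'₁ (fun Q => ?_) hfin
  simpa only [one_div_mul_one_div] using hyp Q

theorem stmt_8 {X : Type*} (e : Equiv.Perm X) (h : X → ℝ)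
    (h0 : ∀ P, 0 ≤ h P) (d d' C : ℝ) (hd : 2 ≤ d) (hd' : 2 ≤ d') (hC : 0 ≤ C)
    (hyp : ∀ P : X,
      (1 + 1 / (d * d')) * h P ≤
        (1 / d) * h (e P) + (1 / d') * h (e.symm P) + C) :
    ∃ B : ℝ, ∀ P : X,
      (Set.range fun k : ℤ => (e ^ k) P).Finite → h P ≤ B :=
  stmt_8_general e h d d' C hd hd' hyp
end
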